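/- Let C be a triangulated category with a weight structure w and let i ≤ j be integers. Then the class C_{[i,j]} = C_{w≥i} ∩ C_{w≤j} equals the extension-closure of the union ⋃_{i≤k≤j} C_{w=k}, i.e., the smallest class containing 0 and all objects of C_{w=k} for i ≤ k ≤ j and closed under extensions. -/

import Mathlib

open CategoryTheory CategoryTheory.Limits CategoryTheory.Pretriangulated

universe v u v₂ u₂

/-- `X` is a retract of `Y`: the identity of `X` factors through `Y`. -/
def IsRetract {C : Type u} [Category.{v} C] (X Y : C) : Prop :=
  ∃ (i : X ⟶ Y) (r : Y ⟶ X), i ≫ r = 𝟙 X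

variable (C : Type u) [Category.{v} C] [HasZeroObject C] [Preadditive C] [HasShift C ℤ]
  [∀ n : ℤ, (shiftFunctor C n).Additive] [Pretriangulated C]

/-- A weight structure on a triangulated category `C`, given by the classes
`LE = C_{w≤0}` and `GE = C_{w≥0}`. -/
structure WeightStructure where
  LE : Set C
  GE : Set C
  retract_mem_LE : ∀ ⦃X Y : C⦄, IsRetract X Y → Y ∈ LE → X ∈ LE
  retract_mem_GE : ∀ ⦃X Y : C⦄, IsRetract X Y → Y ∈ GE → X ∈ GE
  shift_LE : ∀ X ∈ LE, X⟦(-1 : ℤ)⟧ ∈ LE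
  shift_GE : ∀ X ∈ GE, X⟦(1 : ℤ)⟧ ∈ GE
  orthogonal : ∀ ⦃X Y : C⦄, X ∈ LE → Y ∈ GE → ∀ f : X ⟶ Y⟦(1 : ℤ)⟧, f = 0
  exists_decomp : ∀ M : C, ∃ (B A : C) (f : B ⟶ M) (g : M ⟶ A) (h : A ⟶ B⟦(1 : ℤ)⟧),
    (Triangle.mk f g h ∈ distTriang C) ∧ B ∈ LE ∧ A⟦(-1 : ℤ)⟧ ∈ GE

namespace WeightStructure

variable {C}

/-- `C_{w≤n} = C_{w≤0}[n]`. -/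
def le (w : WeightStructure C) (n : ℤ) : Set C := {X : C | X⟦(-n)⟧ ∈ w.LE}

/-- `C_{w≥n} = C_{w≥0}[n]`. -/
def ge (w : WeightStructure C) (n : ℤ) : Set C := {X : C | X⟦(-n)⟧ ∈ w.GE}

/-- `C_{w=n} = C_{w≤n} ∩ C_{w≥n}`. -/
def heart (w : WeightStructure C) (n : ℤ) : Set C := w.le n ∩ w.ge n

end WeightStructure

variable {C}

/-- The envelope of a class `D`: the smallest class containing `D` and all zero objects that is
closed under extensions and retracts. -/
inductive Envelope (D : Set C) : C → Prop
  | of (X : C) (hX : X ∈ D) : Envelope D X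
  | zero (Z : C) (hZ : IsZero Z) : Envelope D Z
  | ext (T : Triangle C) (hT : T ∈ distTriang C)
      (h₁ : Envelope D T.obj₁) (h₃ : Envelope D T.obj₃) : Envelope D T.obj₂
  | retract (X Y : C) (h : IsRetract X Y) (hY : Envelope D Y) : Envelope D X

/-- The extension-closure of a class `D`: the smallest class containing `D` and all zero
objects that is closed under extensions. -/
inductive ExtClosure (D : Set C) : C → Prop
  | of (X : C) (hX : X ∈ D) : ExtClosure D X
  | zero (Z : C) (hZ : IsZero Z) : ExtClosure D Z
  | ext (T : Triangle C) (hT : T ∈ distTriang C)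
      (h₁ : ExtClosure D T.obj₁) (h₃ : ExtClosure D T.obj₃) : ExtClosure D T.obj₂


/-!
Both `C_{w≤n}` and `C_{w≥n}` are closed under extensions: if `T.obj₁, T.obj₃ ∈ C_{w≤n}`, then in a
weight decomposition `B → T.obj₂ → A → B⟦1⟧` with `A ∈ C_{w≥n+1}` the map `T.obj₂ → A` vanishes by
orthogonality, so `T.obj₂` is a retract of `B ∈ C_{w≤n}`. This gives `⊇`. For `⊆`, induct on `j`:
for `X ∈ C_{[i,j+1]}` take a decomposition `B → X → A → B⟦1⟧` with `B ∈ C_{w≤j}`, `A ∈ C_{w≥j+1}`;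
the rotated triangles put `A` in `C_{w≤j+1}` and `B` in `C_{w≥i}`, so `A ∈ C_{w=j+1}`,
`B ∈ C_{[i,j]}`, and `X` is an extension of `A` by `B`.
-/

lemma CategoryTheory.Pretriangulated.distinguished_of_iso_obj₂ {T : Triangle C}
    (hT : T ∈ distTriang C) {M : C} (e : T.obj₂ ≅ M) :
    Triangle.mk (T.mor₁ ≫ e.hom) (e.inv ≫ T.mor₂) T.mor₃ ∈ distTriang C := by
  refine isomorphic_distinguished _ hT _
    (Triangle.isoMk _ _ (Iso.refl _) e.symm (Iso.refl _) ?_ ?_ ?_) <;>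
  -- `(Triangle.mk ..).obj₁` is `T.obj₁` only up to unfolding `Triangle.mk`, which `simp` won't do
  · dsimp only [Triangle.mk]
    simp

lemma ExtClosure.mono {D D' : Set C} (h : D ⊆ D') {X : C} (hX : ExtClosure D X) :
    ExtClosure D' X := by
  induction hX with
  | of X hX => exact .of X (h hX)
  | zero Z hZ => exact .zero Z hZ
  | ext T hT _ _ ih₁ ih₃ => exact .ext T hT ih₁ ih₃

lemma ExtClosure.mem_of_closed {D S : Set C} (hD : D ⊆ S) (hS₀ : ∀ Z : C, IsZero Z → Z ∈ S)
    (hS : ∀ T ∈ distTriang C, T.obj₁ ∈ S → T.obj₃ ∈ S → T.obj₂ ∈ S) {X : C}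
    (hX : ExtClosure D X) : X ∈ S := by
  induction hX with
  | of X hX => exact hD hX
  | zero Z hZ => exact hS₀ Z hZ
  | ext T hT _ _ ih₁ ih₃ => exact hS T hT ih₁ ih₃

namespace WeightStructure

variable (w : WeightStructure C)

lemma mem_LE_of_iso {X Y : C} (e : X ≅ Y) (h : X ∈ w.LE) : Y ∈ w.LE :=
  w.retract_mem_LE ⟨e.inv, e.hom, e.inv_hom_id⟩ h

lemma mem_GE_of_iso {X Y : C} (e : X ≅ Y) (h : X ∈ w.GE) : Y ∈ w.GE :=
  w.retract_mem_GE ⟨e.inv, e.hom, e.inv_hom_id⟩ h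

lemma isZero_mem_LE {Z : C} (hZ : IsZero Z) : Z ∈ w.LE := by
  obtain ⟨B, -, -, -, -, -, hB, -⟩ := w.exists_decomp Z
  exact w.retract_mem_LE ⟨0, 0, hZ.eq_of_src _ _⟩ hB

lemma isZero_mem_GE {Z : C} (hZ : IsZero Z) : Z ∈ w.GE := by
  obtain ⟨-, A, -, -, -, -, -, hA⟩ := w.exists_decomp Z
  exact w.retract_mem_GE ⟨0, 0, hZ.eq_of_src _ _⟩ hA

lemma shift_mem_LE_of_nonpos {X : C} (h : X ∈ w.LE) {k : ℤ} (hk : k ≤ 0) : X⟦k⟧ ∈ w.LE := by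
  induction k, hk using Int.leInductionDown with
  | base => exact w.mem_LE_of_iso ((shiftFunctorZero C ℤ).symm.app X) h
  | pred n _ ih =>
    exact w.mem_LE_of_iso ((shiftFunctorAdd' C n (-1) (n - 1) (by ring)).symm.app X)
      (w.shift_LE _ ih)

lemma shift_mem_GE_of_nonneg {X : C} (h : X ∈ w.GE) {k : ℤ} (hk : 0 ≤ k) : X⟦k⟧ ∈ w.GE := by
  induction k, hk using Int.leInduction with
  | base => exact w.mem_GE_of_iso ((shiftFunctorZero C ℤ).symm.app X) h
  | succ n _ ih =>
    exact w.mem_GE_of_iso ((shiftFunctorAdd' C n 1 (n + 1) rfl).symm.app X) (w.shift_GE _ ih)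

lemma le_monotone : Monotone w.le := fun n m hnm X hX =>
  w.mem_LE_of_iso ((shiftFunctorAdd' C (-n) (n - m) (-m) (by ring)).symm.app X)
    (w.shift_mem_LE_of_nonpos hX (by omega))

lemma ge_antitone : Antitone w.ge := fun m n hmn X hX =>
  w.mem_GE_of_iso ((shiftFunctorAdd' C (-n) (n - m) (-m) (by ring)).symm.app X)
    (w.shift_mem_GE_of_nonneg hX (by omega))

lemma shift_mem_le {X : C} {n : ℤ} (h : X ∈ w.le n) (m : ℤ) : X⟦m⟧ ∈ w.le (n + m) :=
  w.mem_LE_of_iso ((shiftFunctorAdd' C m (-(n + m)) (-n) (by ring)).app X) h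

lemma shift_mem_ge {X : C} {n : ℤ} (h : X ∈ w.ge n) (m : ℤ) : X⟦m⟧ ∈ w.ge (n + m) :=
  w.mem_GE_of_iso ((shiftFunctorAdd' C m (-(n + m)) (-n) (by ring)).app X) h

lemma retract_mem_le {X Y : C} {n : ℤ} (h : IsRetract X Y) (hY : Y ∈ w.le n) : X ∈ w.le n := by
  obtain ⟨i, r, hir⟩ := h
  refine w.retract_mem_LE ⟨i⟦-n⟧', r⟦-n⟧', ?_⟩ hY
  rw [← Functor.map_comp, hir, (shiftFunctor C (-n)).map_id]

lemma retract_mem_ge {X Y : C} {n : ℤ} (h : IsRetract X Y) (hY : Y ∈ w.ge n) : X ∈ w.ge n := by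
  obtain ⟨i, r, hir⟩ := h
  refine w.retract_mem_GE ⟨i⟦-n⟧', r⟦-n⟧', ?_⟩ hY
  rw [← Functor.map_comp, hir, (shiftFunctor C (-n)).map_id]

lemma isZero_mem_le {Z : C} (hZ : IsZero Z) (n : ℤ) : Z ∈ w.le n :=
  w.isZero_mem_LE (Functor.map_isZero _ hZ)

lemma isZero_mem_ge {Z : C} (hZ : IsZero Z) (n : ℤ) : Z ∈ w.ge n :=
  w.isZero_mem_GE (Functor.map_isZero _ hZ)

lemma hom_eq_zero_of_lt {X Y : C} {n m : ℤ} (hX : X ∈ w.le n) (hY : Y ∈ w.ge m) (hnm : n < m)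
    (f : X ⟶ Y) : f = 0 := by
  have hY' : Y⟦-(n + 1)⟧ ∈ w.GE := w.ge_antitone (show n + 1 ≤ m by omega) hY
  let e : Y⟦-n⟧ ≅ (Y⟦-(n + 1)⟧)⟦(1 : ℤ)⟧ := (shiftFunctorAdd' C (-(n + 1)) 1 (-n) (by ring)).app Y
  have hf : f⟦-n⟧' = 0 := by
    rw [← cancel_mono e.hom, zero_comp]
    exact w.orthogonal hX hY' _
  exact (shiftFunctor C (-n)).map_injective (by rw [hf, Functor.map_zero])

lemma exists_distTriang_mem_le_mem_ge (M : C) (n : ℤ) :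
    ∃ (B A : C) (f : B ⟶ M) (g : M ⟶ A) (h : A ⟶ B⟦(1 : ℤ)⟧),
      Triangle.mk f g h ∈ distTriang C ∧ B ∈ w.le n ∧ A ∈ w.ge (n + 1) := by
  obtain ⟨B, A, f, g, h, hT, hB, hA⟩ := w.exists_decomp (M⟦-n⟧)
  refine ⟨B⟦n⟧, A⟦n⟧, _, _, _, distinguished_of_iso_obj₂ (Triangle.shift_distinguished _ hT n)
    ((shiftFunctorCompIsoId C (-n) n (by ring)).app M), ?_, ?_⟩
  · exact w.mem_LE_of_iso ((shiftFunctorCompIsoId C n (-n) (by ring)).symm.app B) hB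
  · exact w.mem_GE_of_iso ((shiftFunctorAdd' C n (-(n + 1)) (-1) (by ring)).app A) hA

lemma mem_le_of_distTriang {T : Triangle C} (hT : T ∈ distTriang C) {n : ℤ}
    (h₁ : T.obj₁ ∈ w.le n) (h₃ : T.obj₃ ∈ w.le n) : T.obj₂ ∈ w.le n := by
  obtain ⟨B, A, f, g, h, hBA, hB, hA⟩ := w.exists_distTriang_mem_le_mem_ge T.obj₂ n
  have hg : g = 0 := by
    obtain ⟨g', hg'⟩ := Triangle.yoneda_exact₂ T hT g (w.hom_eq_zero_of_lt h₁ hA (by omega) _)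
    rw [hg', w.hom_eq_zero_of_lt h₃ hA (by omega) g', comp_zero]
  obtain ⟨s, hs⟩ := Triangle.coyoneda_exact₂ _ hBA (𝟙 T.obj₂) (by subst hg; exact comp_zero)
  exact w.retract_mem_le ⟨s, f, hs.symm⟩ hB

lemma mem_ge_of_distTriang {T : Triangle C} (hT : T ∈ distTriang C) {n : ℤ}
    (h₁ : T.obj₁ ∈ w.ge n) (h₃ : T.obj₃ ∈ w.ge n) : T.obj₂ ∈ w.ge n := by
  obtain ⟨B, A, f, g, h, hBA, hB, hA⟩ := w.exists_distTriang_mem_le_mem_ge T.obj₂ (n - 1)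
  have hf : f = 0 := by
    obtain ⟨f', hf'⟩ := Triangle.coyoneda_exact₂ T hT f (w.hom_eq_zero_of_lt hB h₃ (by omega) _)
    rw [hf', w.hom_eq_zero_of_lt hB h₁ (by omega) f', zero_comp]
  obtain ⟨r, hr⟩ := Triangle.yoneda_exact₂ _ hBA (𝟙 T.obj₂) (by subst hf; exact zero_comp)
  exact w.retract_mem_ge ⟨g, r, hr.symm⟩ (by simpa using hA)

def heartsIcc (i j : ℤ) : Set C := {Y : C | ∃ k : ℤ, i ≤ k ∧ k ≤ j ∧ Y ∈ w.heart k}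

lemma heartsIcc_mono {i i' j j' : ℤ} (hi : i' ≤ i) (hj : j ≤ j') :
    w.heartsIcc i j ⊆ w.heartsIcc i' j' := fun _ ⟨k, hik, hkj, hk⟩ =>
  ⟨k, hi.trans hik, hkj.trans hj, hk⟩

lemma heartsIcc_subset_ge_inter_le (i j : ℤ) : w.heartsIcc i j ⊆ w.ge i ∩ w.le j :=
  fun _ ⟨_, hik, hkj, hle, hge⟩ => ⟨w.ge_antitone hik hge, w.le_monotone hkj hle⟩

lemma mem_ge_inter_le_of_extClosure {i j : ℤ} {X : C} (hX : ExtClosure (w.heartsIcc i j) X) :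
    X ∈ w.ge i ∩ w.le j :=
  hX.mem_of_closed (w.heartsIcc_subset_ge_inter_le i j)
    (fun _ hZ => ⟨w.isZero_mem_ge hZ i, w.isZero_mem_le hZ j⟩)
    (fun _ hT h₁ h₃ =>
      ⟨w.mem_ge_of_distTriang hT h₁.1 h₃.1, w.mem_le_of_distTriang hT h₁.2 h₃.2⟩)

lemma extClosure_heartsIcc_of_mem_ge_of_mem_le {i j : ℤ} (hij : i ≤ j) {X : C}
    (hge : X ∈ w.ge i) (hle : X ∈ w.le j) : ExtClosure (w.heartsIcc i j) X := by
  induction j, hij using Int.leInduction generalizing X with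
  | base => exact .of X ⟨i, le_rfl, le_rfl, hle, hge⟩
  | succ j hij ih =>
    obtain ⟨B, A, f, g, h, hBA, hB, hA⟩ := w.exists_distTriang_mem_le_mem_ge X j
    have hAle : A ∈ w.le (j + 1) :=
      w.mem_le_of_distTriang (rot_of_distTriang _ hBA) hle (w.shift_mem_le hB 1)
    have hBge : B ∈ w.ge i := w.mem_ge_of_distTriang (inv_rot_of_distTriang _ hBA)
      (w.ge_antitone (show i ≤ j + 1 + -1 by omega) (w.shift_mem_ge hA (-1))) hge
    exact .ext _ hBA ((ih hBge hB).mono (w.heartsIcc_mono le_rfl (by omega)))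
      (.of A ⟨j + 1, by omega, le_rfl, hAle, hA⟩)

end WeightStructure

theorem stmt_8 (w : WeightStructure C) (i j : ℤ) (hij : i ≤ j) :
    w.ge i ∩ w.le j =
      {X : C | ExtClosure {Y : C | ∃ k : ℤ, i ≤ k ∧ k ≤ j ∧ Y ∈ w.heart k} X} :=
  Set.ext fun _ => ⟨fun ⟨hge, hle⟩ => w.extClosure_heartsIcc_of_mem_ge_of_mem_le hij hge hle,
    w.mem_ge_inter_le_of_extClosure⟩
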